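/- For every integer n ≥ 1, one has the exact identity s_n/(ε·s_{n−1}) = (1 − 1/(6n))(1 − 1/(2n))(1 − 5/(6n)) · (S+n)/(S+n−1); moreover, defining φ_n by s_n/(ε·s_{n−1}) = 1 − 1/(2n) + (5/36 − S)/n² + (5/72 − S/2 + S²)/n³ + φ_n/n⁴, one has 0.05 < φ_n < 2.19 for all n ≥ 1, and φ_n < 0.11 for all n ≥ 2. -/

import Mathlib

/-!
Cancelling factorials, the ratio of consecutive terms is
`(6n-5)(6n-4)⋯(6n) / ((3n-2)(3n-1)(3n) n³ 640320³) · (n+S)/(n-1+S)`, and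
`(6n-5)(6n-3)(6n-1)·8/n³ = 1728 (1 - 1/(6n))(1 - 1/(2n))(1 - 5/(6n))`, which the factor `ε`
absorbs. Expanding in `1/n`, the remainder is exactly `φ_n = K n / (S + n - 1)` with
`K = (5 - 46S + 108S² - 72S³)/72 ≈ 0.0544`. Since `S < 1`, this decreases in `n` towards `K`,
so `φ_n` lies between `K` and `φ_1 = K/S ≈ 2.183`, and `φ_2 = 2K/(S+1) ≈ 0.106`.
-/

open Real Filter

/-- `S = 13591409/545140134` from the Chudnovsky series. -/
noncomputable def S : ℝ := 13591409 / 545140134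

/-- `ε = 1728/640320³ = 53360⁻³`. -/
noncomputable def eps : ℝ := 1728 / 640320 ^ 3

/-- The terms `s_k = (6k)!/((3k)!·(k!)³) · (k+S)/640320^{3k}` of the Chudnovsky series. -/
noncomputable def s (k : ℕ) : ℝ :=
  (Nat.factorial (6 * k) : ℝ) / ((Nat.factorial (3 * k) : ℝ) * (Nat.factorial k : ℝ) ^ 3)
    * ((k : ℝ) + S) / 640320 ^ (3 * k)

lemma factorial_add_three (a : ℕ) :
    (a + 3).factorial = a.factorial * ((a + 1) * (a + 2) * (a + 3)) := by
  simp only [Nat.factorial_succ]; ring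

lemma factorial_add_six (a : ℕ) :
    (a + 6).factorial =
      a.factorial * ((a + 1) * (a + 2) * (a + 3) * (a + 4) * (a + 5) * (a + 6)) := by
  simp only [Nat.factorial_succ]; ring

lemma S_pos : 0 < S := by norm_num [S]

lemma s_succ_div_eps_mul_s (m : ℕ) :
    s (m + 1) / (eps * s m) =
      (1 - 1 / (6 * ((m : ℝ) + 1))) * (1 - 1 / (2 * ((m : ℝ) + 1))) *
        (1 - 5 / (6 * ((m : ℝ) + 1))) * ((S + ((m : ℝ) + 1)) / (S + ((m : ℝ) + 1) - 1)) := by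
  have hmS : (m : ℝ) + S ≠ 0 := by have := S_pos; positivity
  rw [show S + ((m : ℝ) + 1) - 1 = m + S by ring]
  simp only [s, eps, mul_add, mul_one, factorial_add_six, factorial_add_three, Nat.factorial_succ,
    pow_add]
  push_cast
  field_simp
  ring

noncomputable def phiLimit (T : ℝ) : ℝ := (5 - 46 * T + 108 * T ^ 2 - 72 * T ^ 3) / 72

lemma ratio_expansion {T x : ℝ} (hx : x ≠ 0) (hd : T + x - 1 ≠ 0) :
    (1 - 1 / (6 * x)) * (1 - 1 / (2 * x)) * (1 - 5 / (6 * x)) * ((T + x) / (T + x - 1)) =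
      1 - 1 / (2 * x) + (5 / 36 - T) / x ^ 2 + (5 / 72 - T / 2 + T ^ 2) / x ^ 3 +
        (phiLimit T * x / (T + x - 1)) / x ^ 4 := by
  unfold phiLimit
  field_simp
  ring

lemma eq_of_ratio_expansion {T x φ : ℝ} (hx : x ≠ 0) (hd : T + x - 1 ≠ 0)
    (h : (1 - 1 / (6 * x)) * (1 - 1 / (2 * x)) * (1 - 5 / (6 * x)) * ((T + x) / (T + x - 1)) =
      1 - 1 / (2 * x) + (5 / 36 - T) / x ^ 2 + (5 / 72 - T / 2 + T ^ 2) / x ^ 3 + φ / x ^ 4) :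
    φ = phiLimit T * x / (T + x - 1) := by
  rw [ratio_expansion hx hd] at h
  exact ((div_left_inj' (pow_ne_zero 4 hx)).mp (add_left_cancel h)).symm

lemma phiLimit_S_bounds :
    0.05 < phiLimit S ∧ phiLimit S < 2.19 * S ∧ 2 * phiLimit S < 0.11 * (S + 1) := by
  norm_num [phiLimit, S]

lemma phi_bounds {x : ℝ} (hx : 1 ≤ x) :
    (0.05 < phiLimit S * x / (S + x - 1) ∧ phiLimit S * x / (S + x - 1) < 2.19) ∧
      (2 ≤ x → phiLimit S * x / (S + x - 1) < 0.11) := by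
  obtain ⟨hK, hK₁, hK₂⟩ := phiLimit_S_bounds
  have hS : 0 ≤ 1 - S := by norm_num [S]
  have hd : 0 < S + x - 1 := by linarith [S_pos]
  refine ⟨⟨?_, ?_⟩, fun hx₂ => ?_⟩
  · rw [lt_div_iff₀ hd]; nlinarith [mul_pos (sub_pos.2 hK) (by linarith : 0 < x)]
  · rw [div_lt_iff₀ hd]; nlinarith [mul_nonneg hS (sub_nonneg.2 hx)]
  · rw [div_lt_iff₀ hd]; nlinarith [mul_nonneg hS (sub_nonneg.2 hx₂)]

theorem ratio_identity_and_phi_bounds (n : ℕ) (hn : 1 ≤ n) :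
    s n / (eps * s (n - 1)) =
      (1 - 1 / (6 * (n : ℝ))) * (1 - 1 / (2 * (n : ℝ))) * (1 - 5 / (6 * (n : ℝ))) *
        ((S + (n : ℝ)) / (S + (n : ℝ) - 1)) ∧
    ∀ φ : ℝ,
      s n / (eps * s (n - 1)) =
        1 - 1 / (2 * (n : ℝ)) + (5 / 36 - S) / (n : ℝ) ^ 2 +
          (5 / 72 - S / 2 + S ^ 2) / (n : ℝ) ^ 3 + φ / (n : ℝ) ^ 4 →
      (0.05 < φ ∧ φ < 2.19) ∧ (2 ≤ n → φ < 0.11) := by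
  obtain ⟨m, rfl⟩ := Nat.exists_eq_add_of_le' hn
  have hx : (1 : ℝ) ≤ (m : ℝ) + 1 := by linarith [(Nat.cast_nonneg m : (0 : ℝ) ≤ m)]
  have hd : S + ((m : ℝ) + 1) - 1 ≠ 0 := by linarith [S_pos]
  simp only [Nat.add_sub_cancel, Nat.cast_add_one]
  refine ⟨s_succ_div_eps_mul_s m, fun φ hφ => ?_⟩
  rw [s_succ_div_eps_mul_s] at hφ
  obtain rfl := eq_of_ratio_expansion (by positivity) hd hφ
  exact ⟨(phi_bounds hx).1, fun h2 => (phi_bounds hx).2 (by exact_mod_cast h2)⟩
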